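/- arXiv:1905.04202 — 3 statements merged into one kernel-verified Lean document; each statement's English description precedes it below -/
import Mathlib

section
/- Let q be a prime power and d a positive integer dividing q - 1 with d ≥ 2. Then there is no permutation polynomial of degree d over F_q. -/
/-!
Hermite's criterion: summing a polynomial of degree at most `q - 1` over `F_q` gives minus its
coefficient of `x ^ (q - 1)`, because `∑ x, x ^ k` vanishes for `k < q - 1` and is `-1` for
`k = q - 1`. If `f` permutes `F_q` then `∑ x, f(x) ^ e = ∑ y, y ^ e = 0` for `e < q - 1`.
With `d * e = q - 1`, the polynomial `f ^ e` has degree exactly `q - 1`, so its sum is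
`-(lc f) ^ e ≠ 0`, a contradiction.
-/

open Polynomial Finset

namespace FiniteField

variable {K : Type*} [Field K] [Fintype K]

theorem sum_pow_card_sub_one : ∑ x : K, x ^ (Fintype.card K - 1) = -1 := by
  classical
  have hq : 1 < Fintype.card K := Fintype.one_lt_card
  rw [← sum_sdiff (subset_univ {0}), sum_singleton, zero_pow (by omega), add_zero,
    sum_congr rfl fun x hx => pow_card_sub_one_eq_one x (by simpa using hx), sum_const,
    nsmul_one, card_sdiff_of_subset (subset_univ _), card_singleton, card_univ,
    Nat.cast_sub hq.le, cast_card_eq_zero, Nat.cast_one, zero_sub]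

theorem sum_eval_eq_neg_coeff_card_sub_one (g : K[X])
    (hg : g.natDegree ≤ Fintype.card K - 1) :
    ∑ x : K, g.eval x = -g.coeff (Fintype.card K - 1) := by
  calc ∑ x : K, g.eval x
      = ∑ x : K, ∑ k ∈ range (Fintype.card K - 1 + 1), g.coeff k * x ^ k :=
        sum_congr rfl fun x _ => eval_eq_sum_range' (by omega) x
    _ = ∑ k ∈ range (Fintype.card K - 1 + 1), g.coeff k * ∑ x : K, x ^ k := by
        rw [sum_comm]
        simp only [mul_sum]
    _ = -g.coeff (Fintype.card K - 1) := by
        rw [sum_range_succ, sum_pow_card_sub_one,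
          sum_eq_zero fun k hk => by rw [sum_pow_lt_card_sub_one K k (mem_range.mp hk), mul_zero]]
        ring

theorem sum_eval_pow_eq_zero_of_bijective {f : K[X]} (hf : Function.Bijective f.eval)
    {e : ℕ} (he : e < Fintype.card K - 1) : ∑ x : K, f.eval x ^ e = 0 := by
  rw [Fintype.sum_bijective _ hf _ (fun y => y ^ e) fun _ => rfl]
  exact sum_pow_lt_card_sub_one K e he

theorem coeff_pow_card_sub_one_eq_zero_of_bijective {f : K[X]}
    (hf : Function.Bijective f.eval) {e : ℕ} (he : e < Fintype.card K - 1)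
    (hdeg : (f ^ e).natDegree ≤ Fintype.card K - 1) :
    (f ^ e).coeff (Fintype.card K - 1) = 0 := by
  rw [← neg_eq_zero, ← sum_eval_eq_neg_coeff_card_sub_one _ hdeg]
  simpa only [eval_pow] using sum_eval_pow_eq_zero_of_bijective hf he

end FiniteField

theorem no_pp_of_degree_dvd_card_sub_one (F : Type*) [Field F] [Fintype F]
    (d : ℕ) (hd2 : 2 ≤ d) (hdvd : d ∣ Fintype.card F - 1)
    (f : Polynomial F) (hdeg : f.natDegree = d) :
    ¬ Function.Bijective (fun a : F => f.eval a) := by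
  intro hbij
  obtain ⟨e, he⟩ := hdvd
  have hf : f ≠ 0 := by rintro rfl; simp at hdeg; omega
  have hq : 1 < Fintype.card F := Fintype.one_lt_card
  have he_pos : 0 < e := Nat.pos_of_ne_zero (by rintro rfl; omega)
  have he_lt : e < Fintype.card F - 1 := by nlinarith
  have hdeg_pow : (f ^ e).natDegree = Fintype.card F - 1 := by
    rw [natDegree_pow, hdeg, he, mul_comm]
  have hcoeff := FiniteField.coeff_pow_card_sub_one_eq_zero_of_bijective hbij he_lt hdeg_pow.le
  rw [← hdeg_pow, coeff_natDegree, leadingCoeff_pow] at hcoeff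
  exact pow_ne_zero e (leadingCoeff_ne_zero.mpr hf) hcoeff
end

section
/- Let q be a prime power and let f ∈ F_q[x] have degree d with 1 ≤ d < q. If the value set of f satisfies #{f(a) : a ∈ F_q} ≥ ⌊q - (q-1)/d⌋ + 1, then f is a permutation polynomial over F_q. -/
open Polynomial Finset

theorem wan_esymm_eq_zero (F : Type*) [Field F] [Fintype F] [DecidableEq F]
    (f : Polynomial F) (k : ℕ) (hk1 : 1 ≤ k) (hd1 : 1 ≤ f.natDegree)
    (hdk : f.natDegree * k < Fintype.card F - 1) :
    (Finset.univ.val.map (fun a : F => f.eval a)).esymm k = 0 := by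
  classical
  set q := Fintype.card F with hq
  have hq2 : 2 ≤ q := Fintype.one_lt_card
  set n := q - 1 with hn
  have hn1 : 1 ≤ n := by omega
  -- characteristic
  set p := ringChar F with hp
  haveI hcharp : CharP F p := ringChar.charP F
  have hpp : p.Prime := CharP.char_is_prime F p
  obtain ⟨e, -, hqe⟩ := FiniteField.card F p
  -- the cyclotomic ring O
  set Φ : Polynomial ℤ := Polynomial.cyclotomic n ℤ with hΦ
  have hirr : Irreducible Φ := Polynomial.cyclotomic.irreducible (by omega)
  have hΦprime : Prime Φ := UniqueFactorizationMonoid.irreducible_iff_prime.mp hirr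
  haveI hdom : IsDomain (AdjoinRoot Φ) := by
    refine (Ideal.Quotient.isDomain_iff_prime _).mpr ?_
    exact (Ideal.span_singleton_prime hΦprime.ne_zero).mpr hΦprime
  set O := AdjoinRoot Φ with hO
  have hcast : ∀ j : ℕ, j ≠ 0 → (j : O) ≠ 0 := by
    intro j hj hj0
    have h1 : (AdjoinRoot.of Φ) ((j : ℕ) : ℤ) = 0 := by
      rw [map_natCast]; exact hj0
    have h2 : Φ ∣ C ((j : ℕ) : ℤ) := by
      rw [← AdjoinRoot.mk_eq_zero]
      exact h1
    have h3 : Φ.natDegree ≤ (C ((j:ℕ):ℤ)).natDegree :=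
      natDegree_le_of_dvd h2 (by simp; exact_mod_cast hj)
    rw [natDegree_C, hΦ, natDegree_cyclotomic] at h3
    have := Nat.totient_pos.mpr (show 0 < n by omega)
    omega
  set ζ : O := AdjoinRoot.root Φ with hζ
  have hζn : ζ ^ n = 1 := by
    have h1 : AdjoinRoot.mk Φ (X ^ n - 1) = 0 :=
      AdjoinRoot.mk_eq_zero.mpr (Polynomial.cyclotomic.dvd_X_pow_sub_one n ℤ)
    have h2 : ζ ^ n - 1 = 0 := by
      rw [← AdjoinRoot.mk_X (f := Φ)] at *
      simpa [map_sub, map_pow] using h1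
    linear_combination h2
  haveI : NeZero ((n : ℕ) : O) := ⟨hcast n (by omega)⟩
  have hprim : IsPrimitiveRoot ζ n := by
    rw [← Polynomial.isRoot_cyclotomic_iff (R := O) (n := n)]
    have h1 := AdjoinRoot.isRoot_root Φ
    rwa [hΦ, map_cyclotomic] at h1
  -- generator of units
  obtain ⟨g₀, hg₀⟩ := IsCyclic.exists_generator (α := Fˣ)
  have horder : orderOf g₀ = n := by
    rw [orderOf_eq_card_of_forall_mem_zpowers hg₀, Nat.card_eq_fintype_card,
      Fintype.card_units]
  have horderF : orderOf ((g₀ : F)) = n := by rw [orderOf_units, horder]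
  have hgprim : IsPrimitiveRoot ((g₀ : F)) n := horderF ▸ IsPrimitiveRoot.orderOf (g₀ : F)
  -- the homomorphism φ : O → F
  have hroot : Polynomial.eval₂ (Int.castRingHom F) (g₀ : F) Φ = 0 := by
    rw [hΦ, eval₂_eq_eval_map, map_cyclotomic_int]
    exact hgprim.isRoot_cyclotomic (by omega)
  set φ : O →+* F := AdjoinRoot.lift (Int.castRingHom F) (g₀ : F) hroot with hφ
  have hφζ : φ ζ = (g₀ : F) := AdjoinRoot.lift_root hroot
  have hφp : φ ((p : ℕ) : O) = 0 := by
    rw [map_natCast]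
    exact CharP.cast_eq_zero F p
  -- discrete logarithm
  have hexists : ∀ x : F, x ≠ 0 → ∃ i, i < n ∧ (g₀ : F) ^ i = x := by
    intro x hx
    obtain ⟨i, hi⟩ := mem_powers_iff_mem_zpowers.mpr (hg₀ (Units.mk0 x hx))
    refine ⟨i % n, Nat.mod_lt _ (by omega), ?_⟩
    have h1 : g₀ ^ (i % n) = g₀ ^ i := by
      rw [← horder]; exact pow_mod_orderOf ..
    have h2 : (g₀ : F) ^ (i % n) = ((g₀ ^ (i % n) : Fˣ) : F) := by push_cast; ring
    have h3 : g₀ ^ i = Units.mk0 x hx := by simpa using hi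
    rw [h2, h1, h3]
    rfl
  set L : F → O := fun x => if hx : x = 0 then 0 else ζ ^ (hexists x hx).choose with hL
  have hφL : ∀ x : F, φ (L x) = x := by
    intro x
    by_cases hx : x = 0
    · simp [hL, hx]
    · simp only [hL, dif_neg hx, map_pow, hφζ]
      exact (hexists x hx).choose_spec.2
  have hLg : ∀ i, i < n → L ((g₀ : F) ^ i) = ζ ^ i := by
    intro i hi
    have hgne : (g₀ : F) ^ i ≠ 0 := pow_ne_zero _ (Units.ne_zero g₀)
    have hspec := (hexists _ hgne).choose_spec
    have hinj : (hexists _ hgne).choose = i := by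
      have := pow_injOn_Iio_orderOf (x := (g₀ : F))
      exact this (by rw [horderF]; exact hspec.1) (by rw [horderF]; exact hi) hspec.2
    simp only [hL, dif_neg hgne, hinj]
  -- power sums of L over F
  have hS0 : ∑ a : F, (L a) ^ (0:ℕ) = (q : O) := by
    simp only [pow_zero]
    rw [Finset.sum_const, Finset.card_univ]
    simp [hq]
  have hSj : ∀ j, 1 ≤ j → j ≤ n - 1 → ∑ a : F, (L a) ^ j = 0 := by
    intro j hj1 hjn
    rw [← Finset.add_sum_erase Finset.univ _ (Finset.mem_univ (0:F))]
    have hL0 : L 0 = 0 := by simp [hL]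
    rw [hL0, zero_pow (by omega), zero_add]
    have hbij : ∑ i ∈ Finset.range n, (ζ ^ i) ^ j
        = ∑ x ∈ Finset.univ.erase (0:F), (L x) ^ j := by
      refine Finset.sum_bij (fun i _ => (g₀ : F) ^ i) ?_ ?_ ?_ ?_
      · intro i _
        exact Finset.mem_erase.mpr ⟨pow_ne_zero _ (Units.ne_zero g₀), Finset.mem_univ _⟩
      · intro i hi i' hi' hee
        exact pow_injOn_Iio_orderOf (by rw [horderF]; simpa using hi)
          (by rw [horderF]; simpa using hi') hee
      · intro x hx
        obtain ⟨i, hi, hgi⟩ := hexists x (Finset.mem_erase.mp hx).1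
        exact ⟨i, Finset.mem_range.mpr hi, hgi⟩
      · intro i hi
        rw [hLg i (Finset.mem_range.mp hi)]
    rw [← hbij]
    have h2 : ∑ i ∈ Finset.range n, (ζ ^ i) ^ j = ∑ i ∈ Finset.range n, (ζ ^ j) ^ i := by
      refine Finset.sum_congr rfl fun i _ => ?_
      rw [← pow_mul, ← pow_mul, mul_comm]
    rw [h2]
    have h3 : (∑ i ∈ Finset.range n, (ζ ^ j) ^ i) * (ζ ^ j - 1) = 0 := by
      rw [geom_sum_mul, ← pow_mul, mul_comm, pow_mul, hζn, one_pow, sub_self]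
    rcases mul_eq_zero.mp h3 with h | h
    · exact h
    · exfalso
      exact hprim.pow_ne_one_of_pos_of_lt (by omega)
        (Nat.lt_of_le_of_lt hjn (Nat.sub_lt (by omega) one_pos)) (sub_eq_zero.mp h)
  -- lift of f to O
  set Fh : Polynomial O := ∑ j ∈ f.support, C (L (f.coeff j)) * X ^ j with hFh
  have hFhmap : Fh.map φ = f := by
    rw [hFh, Polynomial.map_sum]
    conv_rhs => rw [f.as_sum_support]
    refine Finset.sum_congr rfl fun j hj => ?_
    rw [Polynomial.map_mul, Polynomial.map_C, Polynomial.map_pow, Polynomial.map_X, hφL,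
      C_mul_X_pow_eq_monomial]
  have hFhdeg : Fh.natDegree ≤ f.natDegree := by
    rw [hFh]
    refine natDegree_sum_le_of_forall_le _ _ fun j hj => ?_
    exact le_trans (natDegree_C_mul_X_pow_le _ _) (le_natDegree_of_mem_supp j hj)
  set v : F → O := fun a => Fh.eval (L a) with hv
  have hφv : ∀ a, φ (v a) = f.eval a := by
    intro a
    have h1 : φ (Fh.eval (L a)) = Polynomial.eval₂ φ (φ (L a)) Fh := by
      have := Polynomial.hom_eval₂ Fh (RingHom.id O) φ (L a)
      rw [RingHom.comp_id] at this
      exact this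
    rw [hv]
    rw [h1, eval₂_eq_eval_map, hFhmap, hφL]
  -- power sums are divisible by q
  have hP : ∀ j, 1 ≤ j → j ≤ k → (q : O) ∣ ∑ a : F, (v a) ^ j := by
    intro j hj1 hjk
    set G : Polynomial O := Fh ^ j with hG
    have hGdeg : G.natDegree < n := by
      calc G.natDegree ≤ j * Fh.natDegree := natDegree_pow_le
      _ ≤ j * f.natDegree := Nat.mul_le_mul_left _ hFhdeg
      _ = f.natDegree * j := mul_comm _ _
      _ ≤ f.natDegree * k := Nat.mul_le_mul_left _ hjk
      _ < n := hdk
    have h1 : ∀ a : F, (v a) ^ j = ∑ i ∈ Finset.range n, G.coeff i * (L a) ^ i := by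
      intro a
      rw [hv]
      rw [← Polynomial.eval_pow, ← hG]
      exact Polynomial.eval_eq_sum_range' hGdeg _
    refine ⟨G.coeff 0, ?_⟩
    calc ∑ a : F, (v a) ^ j = ∑ a : F, ∑ i ∈ Finset.range n, G.coeff i * (L a) ^ i :=
          Finset.sum_congr rfl fun a _ => h1 a
    _ = ∑ i ∈ Finset.range n, ∑ a : F, G.coeff i * (L a) ^ i := Finset.sum_comm
    _ = ∑ i ∈ Finset.range n, G.coeff i * ∑ a : F, (L a) ^ i := by
          exact Finset.sum_congr rfl fun i _ => (Finset.mul_sum _ _ _).symm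
    _ = (q:O) * G.coeff 0 := by
          have hside1 : ∀ i ∈ Finset.range n, i ≠ 0 → G.coeff i * ∑ a : F, (L a) ^ i = 0 := by
            intro i hi hi0
            have hilt := Finset.mem_range.mp hi
            rw [hSj i (by omega) (by omega), mul_zero]
          have hside2 : (0:ℕ) ∉ Finset.range n → G.coeff 0 * ∑ a : F, (L a) ^ (0:ℕ) = 0 := by
            intro h0
            exact absurd (Finset.mem_range.mpr (by omega)) h0
          rw [Finset.sum_eq_single 0 hside1 hside2, hS0]
          ring
  -- Newton's identities
  set E : ℕ → O := fun i => MvPolynomial.eval v (MvPolynomial.esymm F O i) with hE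
  have hNewton : (q : O) ∣ (k : O) * E k := by
    have h0 := congrArg (MvPolynomial.eval v) (MvPolynomial.mul_esymm_eq_sum F O k)
    simp only [map_mul, map_pow, map_neg, map_one, map_sum, map_natCast] at h0
    rw [hE]
    rw [h0]
    refine Dvd.dvd.mul_left ?_ _
    refine Finset.dvd_sum fun a ha => ?_
    obtain ⟨hmem, hlt⟩ := Finset.mem_filter.mp ha
    have hsum := Finset.HasAntidiagonal.mem_antidiagonal.mp hmem
    have h2 : MvPolynomial.eval v (MvPolynomial.psum F O a.2) = ∑ x : F, (v x) ^ a.2 := by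
      rw [MvPolynomial.psum, MvPolynomial.eval_sum]
      simp
    refine Dvd.dvd.mul_left ?_ _
    rw [h2]
    exact hP a.2 (by omega) (by omega)
  -- divide: E k is divisible by p
  have hdiv : ∃ w : O, E k = (p : O) * w := by
    obtain ⟨Y, hY⟩ := hNewton
    set gd := Nat.gcd k q with hgd
    have hkq : k < q := by
      have h1 : k ≤ f.natDegree * k := Nat.le_mul_of_pos_left k (by omega)
      omega
    have hgdq : gd ∣ q := Nat.gcd_dvd_right k q
    have hgdk : gd ∣ k := Nat.gcd_dvd_left k q
    have hgdpos : 0 < gd := Nat.gcd_pos_of_pos_left q (by omega)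
    have hgdlt : gd < q := lt_of_le_of_lt (Nat.le_of_dvd (by omega) hgdk) hkq
    set A : O := ((Nat.gcdA k q : ℤ) : O) with hA
    set B : O := ((Nat.gcdB k q : ℤ) : O) with hB
    have hbez : (gd : O) = (k : O) * A + (q : O) * B := by
      have hb := Nat.gcd_eq_gcd_ab k q
      have : ((Nat.gcd k q : ℤ) : O) = (((k:ℤ) * Nat.gcdA k q + (q:ℤ) * Nat.gcdB k q : ℤ) : O) := by
        rw [← hb]
      rw [hgd]
      push_cast at this ⊢
      rw [this, Int.cast_mul, Int.cast_mul, Int.cast_natCast, Int.cast_natCast]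
    have hfact : (gd : O) * E k = (q : O) * (A * Y + B * E k) := by
      calc (gd : O) * E k = ((k:O) * E k) * A + (q:O) * B * E k := by rw [hbez]; ring
      _ = ((q:O) * Y) * A + (q:O) * B * E k := by rw [hY]
      _ = (q : O) * (A * Y + B * E k) := by ring
    have hqq : (q : O) = (gd : O) * ((q / gd : ℕ) : O) := by
      rw [← Nat.cast_mul, Nat.mul_div_cancel' hgdq]
    have hcancel : E k = ((q / gd : ℕ) : O) * (A * Y + B * E k) := by
      refine mul_left_cancel₀ (hcast gd (by omega)) ?_
      rw [hfact, hqq]; ring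
    -- p divides q / gd
    have hdvd1 : q / gd ∣ q := ⟨gd, by rw [Nat.div_mul_cancel hgdq]⟩
    have hqe' : q = p ^ (e:ℕ) := hqe
    have hdvd2 : q / gd ∣ p ^ (e:ℕ) := by rw [← hqe']; exact hdvd1
    obtain ⟨t, ht, hqt⟩ := (Nat.dvd_prime_pow hpp).mp hdvd2
    have ht0 : t ≠ 0 := by
      intro h0
      rw [h0, pow_zero] at hqt
      have : q = gd := by
        have h2 := Nat.div_mul_cancel hgdq
        rw [hqt, one_mul] at h2
        omega
      omega
    have hpq : p ∣ q / gd := hqt ▸ dvd_pow_self p ht0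
    obtain ⟨w0, hw0⟩ := hpq
    refine ⟨((w0 : ℕ) : O) * (A * Y + B * E k), ?_⟩
    calc E k = ((q / gd : ℕ) : O) * (A * Y + B * E k) := hcancel
    _ = ((p * w0 : ℕ) : O) * (A * Y + B * E k) := by rw [← hw0]
    _ = (p:O) * (((w0:ℕ):O) * (A * Y + B * E k)) := by rw [Nat.cast_mul]; ring
  -- reduce mod p and conclude
  obtain ⟨w, hw⟩ := hdiv
  have hEzero : φ (E k) = 0 := by rw [hw, map_mul, hφp, zero_mul]
  have hEF : MvPolynomial.eval (fun a : F => f.eval a) (MvPolynomial.esymm F F k) = 0 := by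
    rw [← hEzero, hE]
    have h1 : φ (MvPolynomial.eval v (MvPolynomial.esymm F O k))
        = MvPolynomial.eval₂ φ (φ ∘ v) (MvPolynomial.esymm F O k) := by
      have h2 := MvPolynomial.eval₂_comp_left φ (RingHom.id O) v (MvPolynomial.esymm F O k)
      rw [MvPolynomial.eval₂_id, RingHom.comp_id] at h2
      exact h2
    rw [h1, ← MvPolynomial.eval_map, MvPolynomial.map_esymm]
    have hvc : (⇑φ ∘ v) = fun a : F => f.eval a := funext hφv
    rw [hvc]
  have h4 : (Finset.univ.val.map (fun a : F => f.eval a)).esymm k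
      = MvPolynomial.eval (fun a : F => f.eval a) (MvPolynomial.esymm F F k) := by
    rw [Finset.esymm_map_val, MvPolynomial.esymm, MvPolynomial.eval_sum]
    refine Finset.sum_congr rfl fun t _ => ?_
    rw [MvPolynomial.eval_prod]
    simp
  rw [h4, hEF]

theorem wan_value_set (F : Type*) [Field F] [Fintype F] [DecidableEq F]
    (f : Polynomial F) (d : ℕ) (hd : f.natDegree = d)
    (hd1 : 1 ≤ d) (hdq : d < Fintype.card F)
    (hcard : ((Finset.univ.image (fun a : F => f.eval a)).card : ℚ) >
      (Fintype.card F : ℚ) - ((Fintype.card F : ℚ) - 1) / (d : ℚ)) :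
    Function.Bijective (fun a : F => f.eval a) := by
  classical
  set q := Fintype.card F with hq
  have hq2 : 2 ≤ q := Fintype.one_lt_card
  set u := (Finset.univ.image (fun a : F => f.eval a)).card with hu
  have hu1 : 1 ≤ u := Finset.card_pos.mpr (Finset.Nonempty.image ⟨0, Finset.mem_univ 0⟩ _)
  have huq : u ≤ q := by
    calc u ≤ (Finset.univ : Finset F).card := Finset.card_image_le
    _ = q := rfl
  set m := q - u with hm
  -- numeric consequence of hcard
  have hdm : d * m < q - 1 := by
    have hd0 : (0:ℚ) < (d:ℚ) := by exact_mod_cast hd1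
    have h1 : ((q - u : ℕ) : ℚ) = (q:ℚ) - u := by
      push_cast [Nat.cast_sub huq]; ring
    have h2 : ((q:ℚ) - 1) / d > (q:ℚ) - u := by linarith [hcard]
    have h3 : (d:ℚ) * ((q:ℚ) - u) < (q:ℚ) - 1 := by
      rw [gt_iff_lt, lt_div_iff₀ hd0] at h2; linarith
    have h4 : ((d * m : ℕ) : ℚ) < ((q - 1 : ℕ) : ℚ) := by
      push_cast [Nat.cast_sub huq, Nat.cast_sub (le_trans one_le_two hq2)]
      rw [show (m:ℚ) = (q:ℚ) - u by rw [hm]; exact h1]; linarith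
    exact_mod_cast h4
  -- the value multiset and its polynomial
  set s : Multiset F := Finset.univ.val.map (fun a : F => f.eval a) with hs
  have hcards : Multiset.card s = q := by simp [hs, hq]
  set Fp : Polynomial F := (s.map (fun t => X - C t)).prod with hFp
  have hmonic : Fp.Monic := monic_multiset_prod_of_monic _ _ (fun i _ => monic_X_sub_C i)
  have hdegF : Fp.natDegree = q := by
    rw [hFp, natDegree_multiset_prod_of_monic]
    · simp [Multiset.map_map, Function.comp, natDegree_X_sub_C, hcards]
    · intro g hg
      obtain ⟨t, _, rfl⟩ := Multiset.mem_map.mp hg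
      exact monic_X_sub_C t
  -- vanishing coefficients
  have hcoeff : ∀ k : ℕ, 1 ≤ k → k ≤ m → Fp.coeff (q - k) = 0 := by
    intro k hk1 hkm
    have hkq : k ≤ q := le_trans hkm (Nat.sub_le _ _)
    have h1 : q - k ≤ Multiset.card s := by rw [hcards]; omega
    rw [hFp, Multiset.prod_X_sub_C_coeff s h1, hcards]
    have h2 : q - (q - k) = k := by omega
    rw [h2]
    have h3 : f.natDegree * k < q - 1 := by
      calc f.natDegree * k = d * k := by rw [hd]
      _ ≤ d * m := Nat.mul_le_mul_left d hkm
      _ < q - 1 := hdm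
    rw [wan_esymm_eq_zero F f k hk1 (hd ▸ hd1) h3, mul_zero]
  -- the difference has small degree
  have hmq : m ≤ q - 2 := by
    have h1 : m ≤ d * m := Nat.le_mul_of_pos_left m (by omega)
    omega
  set D : Polynomial F := Fp - (X ^ q - X) with hD
  have hDdeg : D.natDegree ≤ q - m - 1 := by
    rw [natDegree_le_iff_coeff_eq_zero]
    intro N hN
    rw [hD, coeff_sub, coeff_sub, coeff_X_pow, coeff_X]
    rcases lt_trichotomy N q with h | h | h
    · have h0 : Fp.coeff N = 0 := by
        have heq : q - (q - N) = N := by omega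
        rw [← heq]; exact hcoeff _ (by omega) (by omega)
      rw [h0, if_neg (by omega : ¬ 1 = N), if_neg (by omega : ¬ N = q)]; ring
    · have hc : Fp.coeff N = 1 := by
        have h2 := hmonic.coeff_natDegree
        rw [hdegF] at h2; rw [h]; exact h2
      rw [hc, if_neg (by omega : ¬ 1 = N), if_pos h]; ring
    · have h0 : Fp.coeff N = 0 := coeff_eq_zero_of_natDegree_lt (by omega)
      rw [h0, if_neg (by omega : ¬ 1 = N), if_neg (by omega : ¬ N = q)]; ring
  -- W divides both
  set img := Finset.univ.image (fun a : F => f.eval a) with himg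
  set W : Polynomial F := (img.val.map (fun t => X - C t)).prod with hW
  have hWmonic : W.Monic := monic_multiset_prod_of_monic _ _ (fun i _ => monic_X_sub_C i)
  have hWdeg : W.natDegree = u := by
    rw [hW, natDegree_multiset_prod_of_monic]
    · simp [Multiset.map_map, Function.comp, natDegree_X_sub_C, hu]
    · intro g hg
      obtain ⟨t, _, rfl⟩ := Multiset.mem_map.mp hg
      exact monic_X_sub_C t
  have hle1 : img.val ≤ Fp.roots := by
    rw [Multiset.le_iff_count]
    intro c
    rw [count_roots]
    by_cases hc : c ∈ img
    · have h1 : img.val.count c = 1 := Multiset.count_eq_one_of_mem img.nodup hc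
      rw [h1]
      rw [Nat.one_le_iff_ne_zero, ← Nat.pos_iff_ne_zero]
      rw [rootMultiplicity_pos hmonic.ne_zero]
      obtain ⟨a, _, ha⟩ := Finset.mem_image.mp hc
      rw [IsRoot, hFp, eval_multiset_prod]
      refine Multiset.prod_eq_zero ?_
      rw [Multiset.map_map]
      refine Multiset.mem_map.mpr ⟨f.eval a, ?_, by simp [ha]⟩
      rw [hs]
      exact Multiset.mem_map.mpr ⟨a, Finset.mem_val.mpr (Finset.mem_univ a), rfl⟩
    · rw [Multiset.count_eq_zero_of_notMem (by simpa using hc)]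
      exact Nat.zero_le _
  have hdvd1 : W ∣ Fp := by
    refine dvd_trans ?_ (prod_multiset_X_sub_C_dvd Fp)
    exact Multiset.prod_dvd_prod_of_le (Multiset.map_le_map hle1)
  have hle2 : img.val ≤ (X ^ q - X : Polynomial F).roots := by
    rw [FiniteField.roots_X_pow_card_sub_X]
    exact Finset.val_le_iff.mpr (Finset.subset_univ img)
  have hdvd2 : W ∣ (X ^ q - X : Polynomial F) := by
    refine dvd_trans ?_ (prod_multiset_X_sub_C_dvd _)
    exact Multiset.prod_dvd_prod_of_le (Multiset.map_le_map hle2)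
  have hWD : W ∣ D := dvd_sub hdvd1 hdvd2
  have hD0 : D = 0 := by
    refine eq_zero_of_dvd_of_natDegree_lt hWD ?_
    rw [hWdeg]
    omega
  have hFpeq : Fp = X ^ q - X := by
    have := sub_eq_zero.mp hD0
    exact this
  -- surjectivity
  have hsurj : Function.Surjective (fun a : F => f.eval a) := by
    intro c
    have hz : Fp.eval c = 0 := by
      rw [hFpeq, eval_sub, eval_pow, eval_X, hq, FiniteField.pow_card, sub_self]
    rw [hFp, eval_multiset_prod, Multiset.map_map] at hz
    rw [Multiset.prod_eq_zero_iff] at hz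
    obtain ⟨t, ht, h0⟩ := Multiset.mem_map.mp hz
    obtain ⟨a, _, rfl⟩ := Multiset.mem_map.mp ht
    refine ⟨a, ?_⟩
    simp only [Function.comp_apply, eval_sub, eval_X, eval_C] at h0
    have : c = f.eval a := by linear_combination h0
    exact this.symm
  exact ⟨Finite.injective_iff_surjective.mpr hsurj, hsurj⟩
end

section
/- Over the finite field F_27 = F_3[e]/(minimal polynomial of a generator e), every permutation polynomial of the form x^8 + a_6 x^6 + a_5 x^5 + a_4 x^4 + a_3 x^3 + a_2 x^2 + a_1 x satisfies a_2 = -a_6^3. Equivalently: if f(x) = x^8 + ∑_{i=1}^6 a_i x^i permutes F_27, then a_2 + a_6^3 = 0. -/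
set_option maxHeartbeats 2000000 in
theorem pp_F27_coeff_relation (F : Type*) [Field F] [Fintype F]
    (hq : Fintype.card F = 27) (a : ℕ → F)
    (hpp : Function.Bijective
      (fun x : F => x ^ 8 + ∑ i ∈ Finset.Icc 1 6, a i * x ^ i)) :
    a 2 + a 6 ^ 3 = 0 := by
  classical
  have hcard : (27 : F) = 0 := by
    have := FiniteField.cast_card_eq_zero F
    rwa [hq] at this
  have h3 : (3 : F) = 0 := by
    have h : (3 : F) ^ 3 = 0 := by rw [show (3:F)^3 = 27 by norm_num, hcard]
    exact pow_eq_zero_iff (by norm_num) |>.mp h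
  have cube_add : ∀ u v : F, (u + v) ^ 3 = u ^ 3 + v ^ 3 := fun u v => by
    linear_combination (u ^ 2 * v + u * v ^ 2) * h3
  have h27x : ∀ x : F, x ^ 27 = x := fun x => by
    have := FiniteField.pow_card x
    rwa [hq] at this
  have hz : ∀ d : ℕ, 1 ≤ d → d ≤ 25 → ∑ x : F, x ^ d = 0 := fun d h1 h2 =>
    FiniteField.sum_pow_lt_card_sub_one (K := F) d (by rw [hq]; omega)
  have S26 : ∑ x : F, x ^ 26 = -1 := by
    have h1 : ∑ x : F, x ^ 26 = ∑ x : F, if x = 0 then (0:F) else 1 :=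
      Finset.sum_congr rfl fun x _ => by
        split_ifs with h
        · simp [h]
        · have := FiniteField.pow_card_sub_one_eq_one x h
          rw [hq] at this; simpa using this
    have h2 : (∑ x : F, if x = 0 then (0:F) else 1)
        = ((Finset.univ.filter (fun x : F => ¬ x = 0)).card : F) := by
      simp [Finset.sum_ite]
    have h4 : (Finset.univ.filter (fun x : F => ¬ x = 0)).card = 26 := by
      have h5 : (Finset.univ.filter (fun x : F => ¬ x = 0)) = ({0}ᶜ : Finset F) := by
        ext y; simp
      rw [h5, Finset.card_compl, Finset.card_singleton, hq]
    rw [h1, h2, h4]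
    have h26 : ((26:ℕ) : F) = 26 := by push_cast; ring
    rw [h26]
    linear_combination hcard
  have S4 : ∑ x : F, x ^ 4 = 0 := hz 4 (by norm_num) (by norm_num)
  have S5 : ∑ x : F, x ^ 5 = 0 := hz 5 (by norm_num) (by norm_num)
  have S6 : ∑ x : F, x ^ 6 = 0 := hz 6 (by norm_num) (by norm_num)
  have S7 : ∑ x : F, x ^ 7 = 0 := hz 7 (by norm_num) (by norm_num)
  have S8 : ∑ x : F, x ^ 8 = 0 := hz 8 (by norm_num) (by norm_num)
  have S9 : ∑ x : F, x ^ 9 = 0 := hz 9 (by norm_num) (by norm_num)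
  have S10 : ∑ x : F, x ^ 10 = 0 := hz 10 (by norm_num) (by norm_num)
  have S11 : ∑ x : F, x ^ 11 = 0 := hz 11 (by norm_num) (by norm_num)
  have S12 : ∑ x : F, x ^ 12 = 0 := hz 12 (by norm_num) (by norm_num)
  have S13 : ∑ x : F, x ^ 13 = 0 := hz 13 (by norm_num) (by norm_num)
  have S14 : ∑ x : F, x ^ 14 = 0 := hz 14 (by norm_num) (by norm_num)
  have S15 : ∑ x : F, x ^ 15 = 0 := hz 15 (by norm_num) (by norm_num)
  have S16 : ∑ x : F, x ^ 16 = 0 := hz 16 (by norm_num) (by norm_num)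
  have S17 : ∑ x : F, x ^ 17 = 0 := hz 17 (by norm_num) (by norm_num)
  have S18 : ∑ x : F, x ^ 18 = 0 := hz 18 (by norm_num) (by norm_num)
  have S19 : ∑ x : F, x ^ 19 = 0 := hz 19 (by norm_num) (by norm_num)
  have S20 : ∑ x : F, x ^ 20 = 0 := hz 20 (by norm_num) (by norm_num)
  have S21 : ∑ x : F, x ^ 21 = 0 := hz 21 (by norm_num) (by norm_num)
  have S22 : ∑ x : F, x ^ 22 = 0 := hz 22 (by norm_num) (by norm_num)
  have S23 : ∑ x : F, x ^ 23 = 0 := hz 23 (by norm_num) (by norm_num)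
  have S24 : ∑ x : F, x ^ 24 = 0 := hz 24 (by norm_num) (by norm_num)
  have S25 : ∑ x : F, x ^ 25 = 0 := hz 25 (by norm_num) (by norm_num)
  have S27 : ∑ x : F, x ^ 27 = 0 := by
    have : ∑ x : F, x ^ 27 = ∑ x : F, x ^ 1 := Finset.sum_congr rfl fun x _ => by
      rw [show (x:F) ^ 27 = x ^ 27 * x ^ 0 by ring, h27x x]; ring
    rw [this]; exact hz 1 (by norm_num) (by norm_num)
  have S28 : ∑ x : F, x ^ 28 = 0 := by
    have : ∑ x : F, x ^ 28 = ∑ x : F, x ^ 2 := Finset.sum_congr rfl fun x _ => by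
      rw [show (x:F) ^ 28 = x ^ 27 * x ^ 1 by ring, h27x x]; ring
    rw [this]; exact hz 2 (by norm_num) (by norm_num)
  have S29 : ∑ x : F, x ^ 29 = 0 := by
    have : ∑ x : F, x ^ 29 = ∑ x : F, x ^ 3 := Finset.sum_congr rfl fun x _ => by
      rw [show (x:F) ^ 29 = x ^ 27 * x ^ 2 by ring, h27x x]; ring
    rw [this]; exact hz 3 (by norm_num) (by norm_num)
  have S30 : ∑ x : F, x ^ 30 = 0 := by
    have : ∑ x : F, x ^ 30 = ∑ x : F, x ^ 4 := Finset.sum_congr rfl fun x _ => by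
      rw [show (x:F) ^ 30 = x ^ 27 * x ^ 3 by ring, h27x x]; ring
    rw [this]; exact hz 4 (by norm_num) (by norm_num)
  have S32 : ∑ x : F, x ^ 32 = 0 := by
    have : ∑ x : F, x ^ 32 = ∑ x : F, x ^ 6 := Finset.sum_congr rfl fun x _ => by
      rw [show (x:F) ^ 32 = x ^ 27 * x ^ 5 by ring, h27x x]; ring
    rw [this]; exact hz 6 (by norm_num) (by norm_num)
  have hIcc : ∀ x : F, ∑ i ∈ Finset.Icc 1 6, a i * x ^ i
      = a 1 * x ^ 1 + a 2 * x ^ 2 + a 3 * x ^ 3 + a 4 * x ^ 4 + a 5 * x ^ 5 + a 6 * x ^ 6 := by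
    intro x
    rw [show Finset.Icc 1 6 = {1,2,3,4,5,6} from rfl]
    simp [Finset.sum_insert, Finset.mem_insert]
    ring
  have hcube : ∀ x : F, (x ^ 8 + ∑ i ∈ Finset.Icc 1 6, a i * x ^ i) ^ 3
      = x ^ 24 + a 6 ^ 3 * x ^ 18 + a 5 ^ 3 * x ^ 15 + a 4 ^ 3 * x ^ 12
        + a 3 ^ 3 * x ^ 9 + a 2 ^ 3 * x ^ 6 + a 1 ^ 3 * x ^ 3 := by
    intro x
    rw [hIcc x]
    rw [show x ^ 8 + (a 1 * x ^ 1 + a 2 * x ^ 2 + a 3 * x ^ 3 + a 4 * x ^ 4 + a 5 * x ^ 5 + a 6 * x ^ 6)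
      = ((((((x ^ 8 + a 1 * x ^ 1) + a 2 * x ^ 2) + a 3 * x ^ 3) + a 4 * x ^ 4) + a 5 * x ^ 5) + a 6 * x ^ 6) by ring]
    rw [cube_add, cube_add, cube_add, cube_add, cube_add, cube_add]
    ring
  have hquart : ∀ x : F, (x ^ 8 + ∑ i ∈ Finset.Icc 1 6, a i * x ^ i) ^ 4
      = 1 * x ^ 32 + a 6 * x ^ 30 + a 5 * x ^ 29 + a 4 * x ^ 28 + a 3 * x ^ 27 + a 2 * x ^ 26 + a 1 * x ^ 25 + a 6 ^ 3 * x ^ 26 + a 6 ^ 3 * a 6 * x ^ 24 + a 6 ^ 3 * a 5 * x ^ 23 + a 6 ^ 3 * a 4 * x ^ 22 + a 6 ^ 3 * a 3 * x ^ 21 + a 6 ^ 3 * a 2 * x ^ 20 + a 6 ^ 3 * a 1 * x ^ 19 + a 5 ^ 3 * x ^ 23 + a 5 ^ 3 * a 6 * x ^ 21 + a 5 ^ 3 * a 5 * x ^ 20 + a 5 ^ 3 * a 4 * x ^ 19 + a 5 ^ 3 * a 3 * x ^ 18 + a 5 ^ 3 * a 2 * x ^ 17 + a 5 ^ 3 *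 a 1 * x ^ 16 + a 4 ^ 3 * x ^ 20 + a 4 ^ 3 * a 6 * x ^ 18 + a 4 ^ 3 * a 5 * x ^ 17 + a 4 ^ 3 * a 4 * x ^ 16 + a 4 ^ 3 * a 3 * x ^ 15 + a 4 ^ 3 * a 2 * x ^ 14 + a 4 ^ 3 * a 1 * x ^ 13 + a 3 ^ 3 * x ^ 17 + a 3 ^ 3 * a 6 * x ^ 15 + a 3 ^ 3 * a 5 * x ^ 14 + a 3 ^ 3 * a 4 * x ^ 13 + a 3 ^ 3 * a 3 * x ^ 12 + a 3 ^ 3 * a 2 * x ^ 11 + a 3 ^ 3 * a 1 * x ^ 10 + a 2 ^ 3 * x ^ 14 + a 2 ^ 3 * a 6 * x ^ 12 + a 2 ^ 3 * a 5 * x ^ 11 + a 2 ^ 3 * a 4 * x ^ 10 + a 2 ^ 3 * a 3 * x ^ 9 + a 2 ^ 3 * a 2 * x ^ 8 + a 2 ^ 3 * a 1 * x ^ 7 + a 1 ^ 3 * x ^ 11 + a 1 ^ 3 * a 6 * x ^ 9 + a 1 ^ 3 * a 5 * x ^ 8 + a 1 ^ 3 * a 4 * x ^ 7 + a 1 ^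 3 * a 3 * x ^ 6 + a 1 ^ 3 * a 2 * x ^ 5 + a 1 ^ 3 * a 1 * x ^ 4 := by
    intro x
    rw [show (x ^ 8 + ∑ i ∈ Finset.Icc 1 6, a i * x ^ i) ^ 4
      = (x ^ 8 + ∑ i ∈ Finset.Icc 1 6, a i * x ^ i) ^ 3 * (x ^ 8 + ∑ i ∈ Finset.Icc 1 6, a i * x ^ i) by ring,
      hcube x, hIcc x]
    ring
  have key : ∑ x : F, (x ^ 8 + ∑ i ∈ Finset.Icc 1 6, a i * x ^ i) ^ 4 = 0 := by
    have := Function.Bijective.sum_comp hpp (fun y => y ^ 4)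
    rw [this]
    exact hz 4 (by norm_num) (by norm_num)
  have main : (0 : F) = ∑ x : F, (1 * x ^ 32 + a 6 * x ^ 30 + a 5 * x ^ 29 + a 4 * x ^ 28 + a 3 * x ^ 27 + a 2 * x ^ 26 + a 1 * x ^ 25 + a 6 ^ 3 * x ^ 26 + a 6 ^ 3 * a 6 * x ^ 24 + a 6 ^ 3 * a 5 * x ^ 23 + a 6 ^ 3 * a 4 * x ^ 22 + a 6 ^ 3 * a 3 * x ^ 21 + a 6 ^ 3 * a 2 * x ^ 20 + a 6 ^ 3 * a 1 * x ^ 19 + a 5 ^ 3 * x ^ 23 + a 5 ^ 3 * a 6 * x ^ 21 + a 5 ^ 3 * a 5 * x ^ 20 + a 5 ^ 3 * a 4 * x ^ 19 + a 5 ^ 3 * a 3 * x ^ 18 + a 5 ^ 3 * a 2 * x ^ 17 + a 5 ^ 3 * a 1 * x ^ 16 + a 4 ^ 3 * x ^ 20 + a 4 ^ 3 * a 6 * x ^ 18 + a 4 ^ 3 * a 5 * x ^ 17 + a 4 ^ 3 * a 4 * x ^ 16 + a 4 ^ 3 * a 3 * x ^ 15 + a 4 ^ 3 * a 2 * x ^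 14 + a 4 ^ 3 * a 1 * x ^ 13 + a 3 ^ 3 * x ^ 17 + a 3 ^ 3 * a 6 * x ^ 15 + a 3 ^ 3 * a 5 * x ^ 14 + a 3 ^ 3 * a 4 * x ^ 13 + a 3 ^ 3 * a 3 * x ^ 12 + a 3 ^ 3 * a 2 * x ^ 11 + a 3 ^ 3 * a 1 * x ^ 10 + a 2 ^ 3 * x ^ 14 + a 2 ^ 3 * a 6 * x ^ 12 + a 2 ^ 3 * a 5 * x ^ 11 + a 2 ^ 3 * a 4 * x ^ 10 + a 2 ^ 3 * a 3 * x ^ 9 + a 2 ^ 3 * a 2 * x ^ 8 + a 2 ^ 3 * a 1 * x ^ 7 + a 1 ^ 3 * x ^ 11 + a 1 ^ 3 * a 6 * x ^ 9 + a 1 ^ 3 * a 5 * x ^ 8 + a 1 ^ 3 * a 4 * x ^ 7 + a 1 ^ 3 * a 3 * x ^ 6 + a 1 ^ 3 * a 2 * x ^ 5 + a 1 ^ 3 * a 1 * x ^ 4) := by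
    rw [← key]
    exact Finset.sum_congr rfl fun x _ => (hquart x)
  rw [Finset.sum_add_distrib] at main
  simp only [Finset.sum_add_distrib, ← Finset.mul_sum] at main
  rw [S4, S5, S6, S7, S8, S9, S10, S11, S12, S13, S14, S15, S16, S17, S18, S19, S20, S21, S22, S23, S24, S25, S26 , S27, S28, S29, S30, S32] at main
  linear_combination main
end
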